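/- Pruning correspondence, inverse form: for all (g,n) with n ≥ 1 and (g,n) ≠ (0,1), and all positive integers μ_1, …, μ_n, one has DH_{g,n}(μ_1, …, μ_n) = Σ_{ν_1=1}^{μ_1} ⋯ Σ_{ν_n=1}^{μ_n} PH_{g,n}(ν_1, …, ν_n) ∏_{i=1}^n C(μ_i, ν_i), where C(μ, ν) = (ν/μ) · [z^{μ−ν}] exp(μ s P(z)) ∈ R, and where the pruned double Hurwitz numbers are defined by PH_{g,n}(ν_1, …, ν_n) = Σ_{μ'_1=1}^{ν_1} ⋯ Σ_{μ'_n=1}^{ν_n} DH_{g,n}(μ'_1, …, μ'_n) ∏_{i=1}^n Ĉ(ν_i, μ'_i) with Ĉ(ν, μ) = (μ/ν) · [z^{ν−μ}] ( (1 − s z P′(z)) · exp(−μ s P(z)) ) ∈ R. -/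

import Mathlib

open scoped Classical

noncomputable section

/-- The coefficient ring `R = ℚ[s, q_1, …, q_d]`, with `s` the variable indexed by `none`
and `q_l` the variable indexed by `some (l-1)`. -/
abbrev HurR (d : ℕ) : Type := MvPolynomial (Option (Fin d)) ℚ

/-- The variable `s`. -/
def sVar (d : ℕ) : HurR d := MvPolynomial.X none

/-- `qVar d l` is the variable `q_l` for `1 ≤ l ≤ d`, and `0` otherwise. -/
def qVar (d : ℕ) (l : ℕ) : HurR d :=
  if h : 0 < l ∧ l ≤ d then MvPolynomial.X (some ⟨l - 1, by omega⟩) else 0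

/-- The number of cycles of a permutation, counting fixed points as cycles of length 1. -/
def cycleCount {G : Type*} [Fintype G] [DecidableEq G] (σ : Equiv.Perm G) : ℕ :=
  Multiset.card σ.cycleType + (Fintype.card G - σ.support.card)

/-- The monomial `q_{λ_1} ⋯ q_{λ_ℓ}` attached to the full cycle type `(λ_1, …, λ_ℓ)` of a
permutation (fixed points counting as cycles of length 1, each contributing `q_1`). -/
def cycleWeight (d : ℕ) {G : Type*} [Fintype G] [DecidableEq G] (σ : Equiv.Perm G) : HurR d :=
  (σ.cycleType.map (qVar d)).prod * qVar d 1 ^ (Fintype.card G - σ.support.card)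

/-- The length of the cycle of `σ` containing `x`. -/
def cycleLen {G : Type*} [Fintype G] [DecidableEq G] (σ : Equiv.Perm G) (x : G) : ℕ :=
  (Finset.univ.filter fun y => σ.SameCycle x y).card

/-- The double Hurwitz number `DH_{g,n}(μ)`, for a family `μ` of positive integers indexed by a
finite type `ι` with `n = #ι`: the weighted count of tuples `(τ_0, τ_1, …, τ_m)` of permutations
of a set of cardinality `N = Σ μ_i` such that `τ_1, …, τ_m` are transpositions,
`τ_0 τ_1 ⋯ τ_m = ρ` for a fixed permutation `ρ` with `n` labelled cycles of lengths `μ_i`, the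
subgroup generated acts transitively, every cycle of `τ_0` has length at most `d`, and
`m = 2g - 2 + n + ℓ` with `ℓ` the number of cycles of `τ_0`; each such tuple is weighted by
`s^m q_{λ_1} ⋯ q_{λ_ℓ} / (m! μ_1 ⋯ μ_n)` where `(λ_1, …, λ_ℓ)` is the cycle type of `τ_0`.
By convention `DH = 0` for `g < 0`. -/
def DH (d : ℕ) (g : ℤ) {ι : Type} [Fintype ι] [DecidableEq ι] (μ : ι → ℕ) : HurR d :=
  if 0 ≤ g then
    ∑ m ∈ Finset.range ((2 * g).toNat + Fintype.card ι + (∑ i, μ i) + 1),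
      ∑ τ : Fin (m + 1) → Equiv.Perm (Σ i, Fin (μ i)),
        if (∀ i, i ≠ 0 → (τ i).IsSwap) ∧
            (List.ofFn τ).prod = Equiv.sigmaCongrRight (fun i => finRotate (μ i)) ∧
            (∀ x y : (Σ i, Fin (μ i)), ∃ π ∈ Subgroup.closure (Set.range τ), π x = y) ∧
            (∀ x, cycleLen (τ 0) x ≤ d) ∧
            (m : ℤ) = 2 * g - 2 + Fintype.card ι + cycleCount (τ 0)
        then ((m.factorial * ∏ i, μ i : ℚ))⁻¹ • (sVar d ^ m * cycleWeight d (τ 0))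
        else 0
  else 0

/-- The formal exponential of a power series (intended for series with zero constant term). -/
def expPS {A : Type*} [CommRing A] [Algebra ℚ A] (f : PowerSeries A) : PowerSeries A :=
  PowerSeries.mk fun n =>
    ∑ k ∈ Finset.range (n + 1), (k.factorial : ℚ)⁻¹ • PowerSeries.coeff n (f ^ k)

/-- The polynomial `P(z) = q_1 z + q_2 z² + ⋯ + q_d z^d` as a power series. -/
def Pser (d : ℕ) : PowerSeries (HurR d) := PowerSeries.mk fun n => qVar d n

/-- The formal derivative of a power series. -/
def dz {A : Type*} [CommSemiring A] (f : PowerSeries A) : PowerSeries A :=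
  PowerSeries.mk fun n => ((n + 1 : ℕ) : A) * PowerSeries.coeff (n + 1) f

/-- The spectral curve coordinate `X(z) = z exp(-s P(z))`. -/
def Xser (d : ℕ) : PowerSeries (HurR d) :=
  PowerSeries.X * expPS (-(PowerSeries.C (sVar d) * Pser d))

/-- The power series `1 - s z P'(z)`. -/
def oneMinus (d : ℕ) : PowerSeries (HurR d) :=
  1 - PowerSeries.C (sVar d) * PowerSeries.X * dz (Pser d)

/-- The inverse `(1 - s z P'(z))⁻¹` in `R[[z]]`. -/
def Wser (d : ℕ) : PowerSeries (HurR d) := PowerSeries.invOfUnit (oneMinus d) 1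

/-- The one-variable series `f(z)`, placed in the `i`-th variable of an `n`-variable
formal power series ring. -/
def embVar {A : Type*} [CommRing A] {n : ℕ} (i : Fin n) (f : PowerSeries A) :
    MvPowerSeries (Fin n) A :=
  fun e => if ∀ j, j ≠ i → e j = 0 then PowerSeries.coeff (e i) f else 0

/-- The formal partial derivative `∂/∂z_i` of a multivariate power series. -/
def pdz {A : Type*} [CommRing A] {n : ℕ} (i : Fin n) (f : MvPowerSeries (Fin n) A) :
    MvPowerSeries (Fin n) A :=
  fun e => ((e i + 1 : ℕ) : A) * MvPowerSeries.coeff (e + Finsupp.single i 1) f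

/-- The derivative `∂/∂s`, applied coefficientwise to a power series over `R = ℚ[s,q]`. -/
def sderiv (d : ℕ) {n : ℕ} (f : MvPowerSeries (Fin n) (HurR d)) :
    MvPowerSeries (Fin n) (HurR d) :=
  fun e => MvPolynomial.pderiv none (MvPowerSeries.coeff e f)

/-- The formal logarithm `log(1 + u) = Σ_{k ≥ 1} (-1)^{k+1} u^k / k` (intended for series `u`
with zero constant term). -/
def mvLog1p {A : Type*} [CommRing A] [Algebra ℚ A] {n : ℕ} (u : MvPowerSeries (Fin n) A) :
    MvPowerSeries (Fin n) A :=
  fun e => ∑ k ∈ Finset.Icc 1 (e.sum fun _ v => v),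
    ((-1 : ℚ) ^ (k + 1) / k) • MvPowerSeries.coeff e (u ^ k)

/-- The free energy `F_{g,n}`, as a power series in the variables indexed by a subset `A` of the
`n` available variables (so that `n` may exceed the number of arguments of `F`). -/
def Fon (d : ℕ) (g : ℤ) {n : ℕ} (A : Finset (Fin n)) : MvPowerSeries (Fin n) (HurR d) :=
  fun e => if (∀ j ∈ A, 0 < e j) ∧ (∀ j ∉ A, e j = 0) then DH d g (fun k : ↥A => e k.val) else 0

/-- The composite series `F_{g,1}(X(z))`. -/
def Fc1 (d : ℕ) (g : ℤ) : PowerSeries (HurR d) :=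
  PowerSeries.mk fun ν => ∑ m ∈ Finset.Icc 1 ν,
    DH d g (fun _ : Fin 1 => m) * PowerSeries.coeff ν (Xser d ^ m)

/-- The composite series `F_{g,n}(X(z_1), …, X(z_n))`. -/
def FcFull (d : ℕ) (g : ℤ) (n : ℕ) : MvPowerSeries (Fin n) (HurR d) :=
  fun e => ∑ μ ∈ Fintype.piFinset (fun i => Finset.Icc 1 (e i)),
    DH d g μ * ∏ i, PowerSeries.coeff (e i) (Xser d ^ μ i)

/-- The composite series `F_{g,#A}((X(z_k))_{k ∈ A})`, in the variables indexed by the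
subset `A` of the `n` available variables. -/
def FcOn (d : ℕ) (g : ℤ) {n : ℕ} (A : Finset (Fin n)) : MvPowerSeries (Fin n) (HurR d) :=
  fun e => if ∀ j ∉ A, e j = 0 then
      ∑ μ ∈ Fintype.piFinset (fun k : ↥A => Finset.Icc 1 (e k.val)),
        DH d g μ * ∏ k : ↥A, PowerSeries.coeff (e k.val) (Xser d ^ μ k)
    else 0

/-- The coefficient `[z^k] f` of a power series, for `k : ℤ`, with the convention that it
vanishes for `k < 0`. -/
def coeffZ {A : Type*} [CommRing A] (k : ℤ) (f : PowerSeries A) : A :=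
  if 0 ≤ k then PowerSeries.coeff k.toNat f else 0

/-- The pruning coefficient `Ĉ(ν, μ) = (μ/ν) [z^{ν-μ}] ((1 - s z P'(z)) exp(-μ s P(z)))`. -/
def Chat (d : ℕ) (ν μ : ℕ) : HurR d :=
  ((μ : ℚ) / ν) • coeffZ ((ν : ℤ) - μ)
    (oneMinus d * expPS (-(PowerSeries.C ((μ : HurR d) * sVar d) * Pser d)))

/-- The pruning coefficient `C(μ, ν) = (ν/μ) [z^{μ-ν}] exp(μ s P(z))`. -/
def Cco (d : ℕ) (μ ν : ℕ) : HurR d :=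
  ((ν : ℚ) / μ) • coeffZ ((μ : ℤ) - ν)
    (expPS (PowerSeries.C ((μ : HurR d) * sVar d) * Pser d))

/-- The pruned double Hurwitz number
`PH_{g,n}(ν) = Σ_{μ ≤ ν} DH_{g,n}(μ) ∏_i Ĉ(ν_i, μ_i)`. -/
def PH (d : ℕ) (g : ℤ) {n : ℕ} (ν : Fin n → ℕ) : HurR d :=
  ∑ μ ∈ Fintype.piFinset (fun i => Finset.Icc 1 (ν i)), DH d g μ * ∏ i, Chat d (ν i) (μ i)


section PruningLemmas

open PowerSeries

variable {A : Type*} [CommRing A] [Algebra ℚ A]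

lemma coeff_dz (f : PowerSeries A) (n : ℕ) :
    coeff n (dz f) = ((n + 1 : ℕ) : A) * coeff (n + 1) f := by
  simp [dz]

lemma dz_eq_derivativeFun (f : PowerSeries A) : dz f = derivativeFun f := by
  ext n
  rw [coeff_dz, show f.derivativeFun = d⁄dX A f from rfl, coeff_derivative, mul_comm]
  push_cast
  ring

lemma dz_mul (f g : PowerSeries A) : dz (f * g) = dz f * g + f * dz g := by
  simp only [dz_eq_derivativeFun, derivativeFun_mul, smul_eq_mul]; ring

lemma coeff_pow_eq_zero {f : PowerSeries A} (hf : constantCoeff f = 0)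
    {m k : ℕ} (h : m < k) : coeff m (f ^ k) = 0 := by
  have hx : (X : PowerSeries A) ^ k ∣ f ^ k := pow_dvd_pow_of_dvd (X_dvd_iff.mpr hf) k
  exact (X_pow_dvd_iff.mp hx) m h

lemma coeff_expPS (f : PowerSeries A) (n : ℕ) :
    coeff n (expPS f)
      = ∑ k ∈ Finset.range (n + 1), (k.factorial : ℚ)⁻¹ • coeff n (f ^ k) := by
  simp [expPS]

lemma coeff_expPS' {f : PowerSeries A} (hf : constantCoeff f = 0) {n M : ℕ} (hM : n < M) :
    coeff n (expPS f)
      = ∑ k ∈ Finset.range M, (k.factorial : ℚ)⁻¹ • coeff n (f ^ k) := by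
  rw [coeff_expPS]
  apply Finset.sum_subset
  · intro k hk
    simp only [Finset.mem_range] at *
    omega
  · intro k _ hk
    simp only [Finset.mem_range, not_lt] at hk
    rw [coeff_pow_eq_zero hf (by omega), smul_zero]

lemma constantCoeff_expPS (f : PowerSeries A) : constantCoeff (expPS f) = 1 := by
  rw [← coeff_zero_eq_constantCoeff_apply, coeff_expPS]
  simp

lemma dz_expPS {f : PowerSeries A} (hf : constantCoeff f = 0) :
    dz (expPS f) = dz f * expPS f := by
  have hpow : ∀ k : ℕ, dz (f ^ k) = k • (f ^ (k - 1) * dz f) := by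
    intro k
    have h1 : dz (f ^ k) = (PowerSeries.derivative A) (f ^ k) := by
      rw [dz_eq_derivativeFun]; rfl
    rw [h1, Derivation.leibniz_pow]
    congr 1
    rw [smul_eq_mul]
    congr 1
    rw [dz_eq_derivativeFun]; rfl
  ext n
  have swap : ∑ p ∈ Finset.HasAntidiagonal.antidiagonal n, coeff p.1 (expPS f) * coeff p.2 (dz f)
      = ∑ j ∈ Finset.range (n + 1), (j.factorial : ℚ)⁻¹ • coeff n (f ^ j * dz f) := by
    have h1 : ∀ p ∈ Finset.HasAntidiagonal.antidiagonal n, coeff p.1 (expPS f) * coeff p.2 (dz f)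
        = ∑ j ∈ Finset.range (n + 1),
            (j.factorial : ℚ)⁻¹ • (coeff p.1 (f ^ j) * coeff p.2 (dz f)) := by
      intro p hp
      rw [coeff_expPS' hf (Nat.lt_succ_of_le (Finset.HasAntidiagonal.antidiagonal.fst_le hp)), Finset.sum_mul]
      exact Finset.sum_congr rfl fun j _ => smul_mul_assoc _ _ _
    rw [Finset.sum_congr rfl h1, Finset.sum_comm]
    refine Finset.sum_congr rfl fun j _ => ?_
    rw [← Finset.smul_sum, ← coeff_mul]
  rw [mul_comm (dz f), coeff_mul, swap]
  calc coeff n (dz (expPS f))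
      = ((n + 1 : ℕ) : A) * coeff (n + 1) (expPS f) := coeff_dz _ _
    _ = ∑ k ∈ Finset.range (n + 2),
          (k.factorial : ℚ)⁻¹ • (((n + 1 : ℕ) : A) * coeff (n + 1) (f ^ k)) := by
        rw [coeff_expPS, Finset.mul_sum]
        exact Finset.sum_congr rfl fun k _ => mul_smul_comm _ _ _
    _ = ∑ k ∈ Finset.range (n + 2),
          (k.factorial : ℚ)⁻¹ • (k • coeff n (f ^ (k - 1) * dz f)) := by
        refine Finset.sum_congr rfl fun k _ => ?_
        rw [← coeff_dz, hpow, map_nsmul]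
    _ = ∑ j ∈ Finset.range (n + 1), (j.factorial : ℚ)⁻¹ • coeff n (f ^ j * dz f) := by
        rw [Finset.sum_range_succ']
        simp only [zero_smul, smul_zero, add_zero, Nat.add_sub_cancel]
        refine Finset.sum_congr rfl fun j _ => ?_
        rw [← Nat.cast_smul_eq_nsmul ℚ, smul_smul]
        congr 1
        rw [Nat.factorial_succ]
        have hj : ((j + 1 : ℕ) : ℚ) ≠ 0 := by positivity
        push_cast
        field_simp

lemma dz_C_mul (c : A) (f : PowerSeries A) : dz (C c * f) = C c * dz f := by
  ext n
  rw [coeff_dz, coeff_C_mul, coeff_C_mul, coeff_dz]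
  ring

lemma constantCoeff_Pser (d : ℕ) : constantCoeff (Pser d) = 0 := by
  rw [← coeff_zero_eq_constantCoeff_apply]
  simp [Pser, qVar]

lemma key_coeff (d : ℕ) {k : ℕ} (hk : 1 ≤ k) (c₁ c₂ : HurR d)
    (hc : c₁ + c₂ = (k : HurR d) * sVar d) :
    coeff k (oneMinus d *
      (expPS (C c₁ * Pser d) * expPS (C c₂ * Pser d))) = 0 := by
  have hP : constantCoeff (Pser d) = 0 := constantCoeff_Pser d
  have h1 : constantCoeff (C c₁ * Pser d) = 0 := by
    rw [map_mul, hP, mul_zero]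
  have h2 : constantCoeff (C c₂ * Pser d) = 0 := by
    rw [map_mul, hP, mul_zero]
  set V := expPS (C c₁ * Pser d) * expPS (C c₂ * Pser d) with hV
  have hdzV : dz V = C (c₁ + c₂) * dz (Pser d) * V := by
    rw [hV, dz_mul, dz_expPS h1, dz_expPS h2, dz_C_mul, dz_C_mul, map_add]
    ring
  have hCk : C (c₁ + c₂) = (k : PowerSeries (HurR d)) * C (sVar d) := by
    rw [hc, map_mul, map_natCast]
  obtain ⟨j, rfl⟩ : ∃ j, k = j + 1 := ⟨k - 1, by omega⟩
  have hXdzV : coeff (j + 1) (X * dz V)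
      = ((j + 1 : ℕ) : HurR d) * coeff (j + 1) V := by
    rw [coeff_succ_X_mul, coeff_dz]
  have heq : (X : PowerSeries (HurR d)) * dz V
      = ((j + 1 : ℕ) : PowerSeries (HurR d))
        * (C (sVar d) * X * dz (Pser d) * V) := by
    rw [hdzV, hCk]
    push_cast
    ring
  have hcancel : coeff (j + 1) (C (sVar d) * X * dz (Pser d) * V)
      = coeff (j + 1) V := by
    have hne : ((j + 1 : ℕ) : HurR d) ≠ 0 := Nat.cast_ne_zero.mpr (by omega)
    apply mul_left_cancel₀ hne
    rw [← hXdzV, heq]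
    have : ((j + 1 : ℕ) : PowerSeries (HurR d))
        = C ((j + 1 : ℕ) : HurR d) := by rw [map_natCast]
    rw [this, coeff_C_mul]
  have hone : oneMinus d * V = V - C (sVar d) * X * dz (Pser d) * V := by
    rw [oneMinus]
    ring
  rw [hone, map_sub, hcancel, sub_self]

lemma Chat_eq_zero (d : ℕ) {v a : ℕ} (h : v < a) : Chat d v a = 0 := by
  rw [Chat, coeffZ, if_neg (by omega), smul_zero]

lemma Cco_eq_zero (d : ℕ) {m v : ℕ} (h : m < v) : Cco d m v = 0 := by
  rw [Cco, coeffZ, if_neg (by omega), smul_zero]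

lemma coeffZ_natCast_sub {x y : ℕ} (h : y ≤ x) (f : PowerSeries A) :
    coeffZ ((x : ℤ) - y) f = coeff (x - y) f := by
  have e : ((x : ℤ) - y) = ((x - y : ℕ) : ℤ) := by omega
  rw [e, coeffZ, if_pos (Int.natCast_nonneg _), Int.toNat_natCast]

lemma oneD (d : ℕ) {a m : ℕ} (ha : 1 ≤ a) (ham : a ≤ m) :
    ∑ v ∈ Finset.Icc 1 m, Chat d v a * Cco d m v = if a = m then 1 else 0 := by
  set Af : PowerSeries (HurR d) :=
    oneMinus d * expPS (-(C ((a : HurR d) * sVar d) * Pser d)) with hAf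
  set Bf : PowerSeries (HurR d) :=
    expPS (C ((m : HurR d) * sVar d) * Pser d) with hBf
  have hm0 : (0 : ℕ) < m := lt_of_lt_of_le ha ham
  have hrestrict : ∑ v ∈ Finset.Icc 1 m, Chat d v a * Cco d m v
      = ∑ v ∈ Finset.Icc a m, Chat d v a * Cco d m v := by
    symm
    apply Finset.sum_subset (Finset.Icc_subset_Icc_left ha)
    intro v hv hv2
    simp only [Finset.mem_Icc] at hv hv2
    rw [Chat_eq_zero d (by omega), zero_mul]
  have hterm : ∀ v ∈ Finset.Icc a m, Chat d v a * Cco d m v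
      = ((a : ℚ) / m) • (coeff (v - a) Af * coeff (m - v) Bf) := by
    intro v hv
    simp only [Finset.mem_Icc] at hv
    rw [Chat, Cco, coeffZ_natCast_sub hv.1, coeffZ_natCast_sub hv.2,
      smul_mul_smul_comm]
    congr 1
    have hv0 : ((v : ℚ)) ≠ 0 := by
      have h0 : 0 < v := lt_of_lt_of_le ha hv.1
      positivity
    rw [div_mul_div_comm, mul_comm (a : ℚ) (v : ℚ), mul_div_mul_left _ _ hv0]
  have hsum : ∑ v ∈ Finset.Icc a m, coeff (v - a) Af * coeff (m - v) Bf
      = coeff (m - a) (Af * Bf) := by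
    rw [coeff_mul, Finset.Nat.sum_antidiagonal_eq_sum_range_succ_mk]
    refine Finset.sum_nbij' (fun v => v - a) (fun b => a + b) ?_ ?_ ?_ ?_ ?_
    · intro v hv
      simp only [Finset.mem_Icc] at hv
      simp only [Finset.mem_range]
      omega
    · intro b hb
      simp only [Finset.mem_range] at hb
      simp only [Finset.mem_Icc]
      omega
    · intro v hv
      simp only [Finset.mem_Icc] at hv
      show a + (v - a) = v
      omega
    · intro b hb
      show a + b - a = b
      omega
    · intro v hv
      simp only [Finset.mem_Icc] at hv
      have hvv : m - v = m - a - (v - a) := by omega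
      rw [hvv]
  rw [hrestrict, Finset.sum_congr rfl hterm, ← Finset.smul_sum, hsum]
  have hAB : Af * Bf = oneMinus d *
      (expPS (C (-((a : HurR d) * sVar d)) * Pser d)
        * expPS (C ((m : HurR d) * sVar d) * Pser d)) := by
    rw [hAf, hBf, map_neg, neg_mul, mul_assoc]
  by_cases hcase : a = m
  · subst hcase
    rw [if_pos rfl, Nat.sub_self]
    have hc0 : coeff 0 (Af * Bf) = 1 := by
      rw [coeff_zero_eq_constantCoeff, map_mul, hAf, hBf, map_mul,
        constantCoeff_expPS, constantCoeff_expPS]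
      rw [oneMinus, map_sub, map_one, map_mul, map_mul, constantCoeff_X]
      ring
    rw [hc0]
    have ha0 : ((a : ℚ)) ≠ 0 := Nat.cast_ne_zero.mpr (by omega)
    rw [div_self ha0, one_smul]
  · rw [if_neg hcase]
    have hk : 1 ≤ m - a := by omega
    have hc : -((a : HurR d) * sVar d) + (m : HurR d) * sVar d
        = ((m - a : ℕ) : HurR d) * sVar d := by
      rw [Nat.cast_sub ham]
      ring
    rw [hAB, key_coeff d hk _ _ hc, smul_zero]

end PruningLemmas

/-- Pruning correspondence, inverse form: for `(g,n) ≠ (0,1)`,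
`DH_{g,n}(μ) = Σ_{ν ≤ μ} PH_{g,n}(ν) ∏_i C(μ_i, ν_i)`. -/
theorem pruning_correspondence_inverse (d : ℕ) (hd : 0 < d) (g n : ℕ) (hn : 1 ≤ n)
    (hgn : ¬(g = 0 ∧ n = 1)) (μ : Fin n → ℕ) (hμ : ∀ i, 0 < μ i) :
    DH d (g : ℤ) μ
      = ∑ ν ∈ Fintype.piFinset (fun i => Finset.Icc 1 (μ i)),
          PH d (g : ℤ) ν * ∏ i, Cco d (μ i) (ν i) := by
  classical
  have hμT : μ ∈ Fintype.piFinset (fun i => Finset.Icc 1 (μ i)) := by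
    simp only [Fintype.mem_piFinset, Finset.mem_Icc]
    exact fun i => ⟨hμ i, le_rfl⟩
  set T := Fintype.piFinset (fun i => Finset.Icc 1 (μ i)) with hT
  have hext : ∀ ν ∈ T, PH d (g : ℤ) ν
      = ∑ μ' ∈ T, DH d (g : ℤ) μ' * ∏ i, Chat d (ν i) (μ' i) := by
    intro ν hν
    simp only [hT, Fintype.mem_piFinset, Finset.mem_Icc] at hν
    rw [PH]
    apply Finset.sum_subset
    · intro μ' hμ'
      simp only [hT, Fintype.mem_piFinset, Finset.mem_Icc] at hμ' ⊢
      exact fun i => ⟨(hμ' i).1, le_trans (hμ' i).2 (hν i).2⟩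
    · intro μ' hμ'T hμ'ν
      simp only [Fintype.mem_piFinset, Finset.mem_Icc, not_forall] at hμ'ν
      obtain ⟨i, hi⟩ := hμ'ν
      have hiT := (Fintype.mem_piFinset.mp hμ'T) i
      simp only [Finset.mem_Icc] at hiT
      have h1 : ν i < μ' i := by omega
      rw [Finset.prod_eq_zero (Finset.mem_univ i) (Chat_eq_zero d h1), mul_zero]
  have step1 : ∀ ν ∈ T, PH d (g : ℤ) ν * ∏ i, Cco d (μ i) (ν i)
      = ∑ μ' ∈ T, DH d (g : ℤ) μ'
          * ∏ i, (Chat d (ν i) (μ' i) * Cco d (μ i) (ν i)) := by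
    intro ν hν
    rw [hext ν hν, Finset.sum_mul]
    refine Finset.sum_congr rfl fun μ' _ => ?_
    rw [Finset.prod_mul_distrib, mul_assoc]
  rw [Finset.sum_congr rfl step1, Finset.sum_comm]
  have step2 : ∀ μ' ∈ T,
      ∑ ν ∈ T, DH d (g : ℤ) μ' * ∏ i, (Chat d (ν i) (μ' i) * Cco d (μ i) (ν i))
      = DH d (g : ℤ) μ' * if μ' = μ then 1 else 0 := by
    intro μ' hμ'
    simp only [hT, Fintype.mem_piFinset, Finset.mem_Icc] at hμ'
    rw [← Finset.mul_sum]
    congr 1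
    have hps := Finset.prod_univ_sum (fun i => Finset.Icc 1 (μ i))
        (fun i v => Chat d v (μ' i) * Cco d (μ i) v)
    rw [hT, ← hps]
    have hfac : ∀ i, (∑ v ∈ Finset.Icc 1 (μ i), Chat d v (μ' i) * Cco d (μ i) v)
        = if μ' i = μ i then 1 else 0 :=
      fun i => oneD d (hμ' i).1 (hμ' i).2
    rw [Finset.prod_congr rfl (fun i _ => hfac i), Finset.prod_boole]
    by_cases hcase : μ' = μ
    · subst hcase
      rw [if_pos rfl, if_pos (fun i _ => rfl)]
    · rw [if_neg hcase, if_neg]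
      intro hall
      exact hcase (funext fun i => hall i (Finset.mem_univ i))
  rw [Finset.sum_congr rfl step2]
  simp only [mul_ite, mul_one, mul_zero]
  rw [Finset.sum_ite_eq' T μ (fun μ' => DH d (g : ℤ) μ'), if_pos hμT]
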